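/- arXiv:2507.17246 — 5 statements merged into one kernel-verified Lean document; each statement's English description precedes it below -/
import Mathlib

section
/- Among all unicyclic graphs with n ≥ 3 vertices, the cycle graph C_n is the unique graph achieving the minimum Euler Sombor index, and this minimum value equals 2√3·n. -/
open scoped Classical

noncomputable def eusWeight {V : Type*} [Fintype V] (G : SimpleGraph V) : Sym2 V → ℝ :=
  Sym2.lift ⟨fun i j => Real.sqrt ((G.degree i : ℝ)^2 + (G.degree j : ℝ)^2 +
      (G.degree i : ℝ) * (G.degree j : ℝ)),
    fun i j => by ring_nf⟩

/-- The Euler Sombor index of a finite simple graph: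
`EUS(G) = Σ_{v_i v_j ∈ E(G)} √(d_i² + d_j² + d_i d_j)`. -/
noncomputable def EUS {V : Type*} [Fintype V] (G : SimpleGraph V) : ℝ :=
  ∑ e ∈ G.edgeFinset, eusWeight G e

/-- `cycleWithPath n g` : the unicyclic graph `C_{n,g}` obtained from the cycle on vertices
`0, …, g-1` by attaching the pendant path `0 — g — (g+1) — ⋯ — (n-1)`.
For `g = n` this is just the cycle `C_n`. -/
def cycleWithPath (n g : ℕ) : SimpleGraph (Fin n) :=
  SimpleGraph.fromRel (fun i j =>
    (j.val = i.val + 1 ∧ i.val + 1 ≠ g) ∨ (i.val = 0 ∧ (j.val = g - 1 ∨ j.val = g)))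

/-!
Since `√(a² + b² + ab) ≥ (√3/2)(a + b)` and `Σ_{uv ∈ E} (d_u + d_v) = Σ_v d_v²`, we get
`EUS(G) ≥ (√3/2) Σ_v d_v²`. If `|E| = |V| = n`, the degrees sum to `2n`, so
`Σ_v d_v² = 4n + Σ_v (d_v - 2)² ≥ 4n`, with equality only when `G` is 2-regular.
A connected 2-regular graph has as many edges as vertices, so it is not a tree and contains a
cycle; since every vertex already has its two neighbours on that cycle, the cycle cannot be left
and covers the whole graph, i.e. `G ≅ C_n`. Conversely each edge of `C_n` contributes `√12 = 2√3`.
-/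

open Finset SimpleGraph

theorem sqrt_three_div_two_mul_add_le_sqrt (a b : ℝ) :
    √3 / 2 * (a + b) ≤ √(a ^ 2 + b ^ 2 + a * b) := by
  refine Real.le_sqrt_of_sq_le ?_
  rw [mul_pow, div_pow, Real.sq_sqrt (by norm_num)]
  nlinarith [sq_nonneg (a - b)]

namespace SimpleGraph

section EulerSombor

variable {V : Type*} [Fintype V] (G : SimpleGraph V)

theorem sum_edgeFinset_sum_mem_eq_sum_degree_smul {M : Type*} [AddCommMonoid M] (f : V → M) :
    ∑ e ∈ G.edgeFinset, ∑ v with v ∈ e, f v = ∑ v, G.degree v • f v := by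
  simp_rw [sum_filter]
  rw [sum_comm]
  refine sum_congr rfl fun v _ => ?_
  rw [← sum_filter, ← G.incidenceFinset_eq_filter, sum_const, card_incidenceFinset_eq_degree]

theorem sqrt_three_div_two_mul_sum_sq_degree_le_EUS :
    √3 / 2 * ∑ v, (G.degree v : ℝ) ^ 2 ≤ EUS G := by
  simp_rw [sq, ← nsmul_eq_mul]
  rw [← G.sum_edgeFinset_sum_mem_eq_sum_degree_smul, mul_sum]
  refine sum_le_sum fun e he => ?_
  induction e with
  | _ a b =>
    have hab : a ≠ b := G.ne_of_adj (G.mem_edgeFinset.mp he)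
    rw [show ({v | v ∈ s(a, b)} : Finset V) = {a, b} by ext; simp, sum_pair hab]
    exact sqrt_three_div_two_mul_add_le_sqrt _ _

theorem EUS_of_isRegularOfDegree {d : ℕ} (h : G.IsRegularOfDegree d) :
    EUS G = √3 * d * #G.edgeFinset := by
  rw [EUS, mul_comm, ← nsmul_eq_mul, ← sum_const]
  refine sum_congr rfl fun e _ => ?_
  induction e with
  | _ a b =>
    simp only [eusWeight, Sym2.lift_mk, h.degree_eq]
    rw [show (d : ℝ) ^ 2 + d ^ 2 + d * d = d ^ 2 * 3 by ring, Real.sqrt_mul (by positivity),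
      Real.sqrt_sq (by positivity), mul_comm]

variable {G}

theorem sum_sq_degree_eq (hE : #G.edgeFinset = Fintype.card V) :
    ∑ v, (G.degree v : ℝ) ^ 2 = 4 * Fintype.card V + ∑ v, ((G.degree v : ℝ) - 2) ^ 2 := by
  have hsum : ∑ v, (G.degree v : ℝ) = 2 * Fintype.card V := by
    exact_mod_cast G.sum_degrees_eq_twice_card_edges.trans (by rw [hE])
  simp only [sub_sq, sum_add_distrib, sum_sub_distrib, ← sum_mul, ← mul_sum, hsum, sum_const,
    card_univ, nsmul_eq_mul]
  ring

theorem four_mul_card_le_sum_sq_degree (hE : #G.edgeFinset = Fintype.card V) :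
    4 * (Fintype.card V : ℝ) ≤ ∑ v, (G.degree v : ℝ) ^ 2 := by
  rw [sum_sq_degree_eq hE]
  exact le_add_of_nonneg_right (sum_nonneg fun v _ => sq_nonneg _)

theorem isRegularOfDegree_two_of_sum_sq_degree_le (hE : #G.edgeFinset = Fintype.card V)
    (h : ∑ v, (G.degree v : ℝ) ^ 2 ≤ 4 * Fintype.card V) : G.IsRegularOfDegree 2 := by
  rw [sum_sq_degree_eq hE] at h
  have hzero := (sum_eq_zero_iff_of_nonneg fun v _ => sq_nonneg ((G.degree v : ℝ) - 2)).mp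
    (le_antisymm (by linarith) (sum_nonneg fun v _ => sq_nonneg _))
  intro v
  exact_mod_cast sub_eq_zero.mp (pow_eq_zero_iff two_ne_zero |>.mp (hzero v (mem_univ v)))

end EulerSombor

section Copy

variable {α β : Type*} [Fintype α] [Fintype β] {A : SimpleGraph α} {B : SimpleGraph β}
  [DecidableRel A.Adj] [DecidableRel B.Adj]

theorem Copy.map_neighborFinset (f : Copy A B) {v : α} (h : B.degree (f v) ≤ A.degree v) :
    (A.neighborFinset v).map f.toEmbedding = B.neighborFinset (f v) :=
  eq_of_subset_of_card_le
    (fun w hw => by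
      obtain ⟨u, hu, rfl⟩ := mem_map.mp hw
      exact (B.mem_neighborFinset _ _).mpr (f.toHom.map_adj ((A.mem_neighborFinset _ _).mp hu)))
    (by rwa [card_map])

theorem Copy.exists_adj_of_adj (f : Copy A B) {v : α} (h : B.degree (f v) ≤ A.degree v) {w : β}
    (hw : B.Adj (f v) w) : ∃ u, A.Adj v u ∧ f u = w := by
  rw [← mem_neighborFinset, ← f.map_neighborFinset h, mem_map] at hw
  obtain ⟨u, hu, rfl⟩ := hw
  exact ⟨u, (A.mem_neighborFinset _ _).mp hu, rfl⟩

theorem Copy.surjective_of_connected [Nonempty α] (f : Copy A B) (hB : B.Connected)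
    (h : ∀ v, B.degree (f v) ≤ A.degree v) : Function.Surjective f := by
  have walk_range : ∀ {x y : β} (p : B.Walk x y), x ∈ Set.range f → y ∈ Set.range f := by
    intro x y p
    induction p with
    | nil => exact _root_.id
    | cons hadj _ ih =>
      rintro ⟨u, rfl⟩
      obtain ⟨u', -, rfl⟩ := f.exists_adj_of_adj (h u) hadj
      exact ih ⟨u', rfl⟩
  intro w
  obtain ⟨p⟩ := hB.preconnected (f (Classical.arbitrary α)) w
  exact walk_range p ⟨_, rfl⟩

noncomputable def Copy.isoOfConnected [Nonempty α] (f : Copy A B) (hB : B.Connected)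
    (h : ∀ v, B.degree (f v) ≤ A.degree v) : A ≃g B where
  toEquiv := Equiv.ofBijective f ⟨f.injective, f.surjective_of_connected hB h⟩
  map_rel_iff' {u w} := by
    refine ⟨fun hadj => ?_, f.toHom.map_adj⟩
    obtain ⟨u', hu', hfu⟩ := f.exists_adj_of_adj (h u) hadj
    exact f.injective hfu ▸ hu'

end Copy

theorem cycleGraph_isRegularOfDegree_two {n : ℕ} (hn : 3 ≤ n) :
    (cycleGraph n).IsRegularOfDegree 2 := by
  obtain ⟨m, rfl⟩ : ∃ m, n = m + 3 := ⟨n - 3, by omega⟩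
  exact fun v => cycleGraph_degree_three_le

theorem IsRegularOfDegree.of_iso {V W : Type*} {G : SimpleGraph V} {G' : SimpleGraph W}
    [G.LocallyFinite] [G'.LocallyFinite] {d : ℕ} (h : G'.IsRegularOfDegree d) (e : G ≃g G') :
    G.IsRegularOfDegree d :=
  fun v => by rw [← e.degree_eq, h.degree_eq]

theorem Connected.nonempty_iso_cycleGraph {V : Type*} [Fintype V] {G : SimpleGraph V}
    (hG : G.Connected) (hreg : G.IsRegularOfDegree 2) :
    Nonempty (G ≃g cycleGraph (Fintype.card V)) := by
  have hE : #G.edgeFinset = Fintype.card V := by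
    have := G.sum_degrees_eq_twice_card_edges
    simp only [hreg.degree_eq, sum_const, card_univ, smul_eq_mul] at this
    omega
  have hcyclic : ¬G.IsAcyclic := fun hacyc => by
    have := (IsTree.mk hG hacyc).card_edgeFinset
    omega
  obtain ⟨k, hk, ⟨f⟩⟩ : ∃ k ≥ 3, cycleGraph k ⊑ G := by
    simpa [isAcyclic_iff_free_cycleGraph] using hcyclic
  obtain ⟨m, rfl⟩ : ∃ m, k = m + 3 := ⟨k - 3, by omega⟩
  let e := f.isoOfConnected hG fun v => by
    rw [hreg.degree_eq]
    exact cycleGraph_degree_three_le.ge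
  rw [← Fintype.card_congr e.toEquiv, Fintype.card_fin]
  exact ⟨e.symm⟩

end SimpleGraph

theorem cycleWithPath_self (n : ℕ) : cycleWithPath n n = cycleGraph n := by
  ext u v
  have hu := u.isLt
  have hv := v.isLt
  rw [cycleGraph_adj', cycleWithPath, fromRel_adj, ne_eq, Fin.ext_iff]
  rcases lt_trichotomy u v with h | rfl | h
  · rw [Fin.coe_sub_iff_lt.mpr h, Fin.coe_sub_iff_le.mpr h.le]
    rw [Fin.lt_def] at h
    omega
  · rw [Fin.coe_sub_iff_le.mpr le_rfl]
    omega
  · rw [Fin.coe_sub_iff_le.mpr h.le, Fin.coe_sub_iff_lt.mpr h]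
    rw [Fin.lt_def] at h
    omega

/-- Among all unicyclic graphs (connected graphs whose number of edges equals the number of
vertices) with `n ≥ 3` vertices, the cycle `C_n` is the unique graph achieving the minimum
Euler Sombor index, and the minimum value is `2√3·n`. -/
theorem eus_min_unicyclic {V : Type*} [Fintype V] (G : SimpleGraph V) (n : ℕ)
    (hn : 3 ≤ n) (hcard : Fintype.card V = n)
    (hconn : G.Connected) (hunicyclic : G.edgeSet.ncard = Fintype.card V) :
    2 * Real.sqrt 3 * n ≤ EUS G ∧
      (EUS G = 2 * Real.sqrt 3 * n ↔ Nonempty (G ≃g cycleWithPath n n)) := by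
  have hE : #G.edgeFinset = Fintype.card V := by
    rwa [← coe_edgeFinset, Set.ncard_coe_finset] at hunicyclic
  subst hcard
  have hsq := G.sqrt_three_div_two_mul_sum_sq_degree_le_EUS
  have hsqrt3 : 0 < √3 / 2 := by positivity
  rw [cycleWithPath_self, show 2 * √3 * Fintype.card V = √3 / 2 * (4 * Fintype.card V) by ring]
  refine ⟨(mul_le_mul_of_nonneg_left (four_mul_card_le_sum_sq_degree hE) hsqrt3.le).trans hsq,
    fun hEUS => ?_, fun ⟨e⟩ => ?_⟩
  · have hsq_le := le_of_mul_le_mul_left (hEUS ▸ hsq) hsqrt3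
    exact hconn.nonempty_iso_cycleGraph (isRegularOfDegree_two_of_sum_sq_degree_le hE hsq_le)
  · rw [G.EUS_of_isRegularOfDegree ((cycleGraph_isRegularOfDegree_two hn).of_iso e), hE]
    push_cast
    ring
end

section
/- Let H₁ be the unicyclic graph of order n obtained from a cycle C_g (3 ≤ g ≤ n−2) by attaching, at a single vertex of the cycle, k ≥ 0 pendant paths of length 1 and ℓ ≥ 0 pendant paths of length at least 2 (so that the attachment vertex has degree k+ℓ+2). Then EUS(H₁) = (ℓ+2)√((k+ℓ+2)² + 2(k+ℓ+2) + 4) + ℓ√7 + k√((k+ℓ+2)² + (k+ℓ+2) + 1) + (n − k − 2ℓ − 2)√12. -/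
/-!
Root `H1` at its cycle: the hub `0` gets the parent `g - 1`, every other vertex its neighbour
towards the hub. Then `v ↦ {v, parent v}` is a bijection from the vertices onto the edges, and
the degree of `v` is one more than its number of children. So `EUS` becomes a sum over the
vertices of a term that depends only on the numbers of children of `v` and of its parent, and
this term is constant on each class of vertices: hub, cycle, pendant vertices, and first, inner
and last vertices of the long paths.
-/

open scoped Classical

/-- Starting index (offset) of the `t`-th long pendant path in the graph `H₁`:
the cycle uses vertices `0,…,g-1`, the `k` pendant (length-one) neighbours of the hub `0` are
`g,…,g+k-1`, and the `t`-th pendant path of length `m t ≥ 2` occupies the `m t` consecutive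
vertices starting at `pathOffset g k m t`. -/
def pathOffset {ℓ : ℕ} (g k : ℕ) (m : Fin ℓ → ℕ) (t : Fin ℓ) : ℕ :=
  g + k + ∑ s ∈ Finset.univ.filter (fun s => s < t), m s

/-- The unicyclic graph `H₁` of order `n`: a cycle on the vertices `0,…,g-1`, with `k` pendant
paths of length `1` (the vertices `g,…,g+k-1`) and `ℓ` pendant paths of lengths `m t ≥ 2`
(`t : Fin ℓ`), all attached at the hub vertex `0` (which then has degree `k + ℓ + 2`). -/
def H1 (n g k : ℕ) {ℓ : ℕ} (m : Fin ℓ → ℕ) : SimpleGraph (Fin n) :=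
  SimpleGraph.fromRel (fun i j =>
    -- edges of the cycle `0 — 1 — ⋯ — (g-1) — 0`
    (j.val = i.val + 1 ∧ i.val + 1 < g) ∨ (i.val = 0 ∧ j.val = g - 1) ∨
    -- the `k` pendant edges at the hub
    (i.val = 0 ∧ g ≤ j.val ∧ j.val < g + k) ∨
    -- first edge of each long pendant path
    (∃ t : Fin ℓ, i.val = 0 ∧ j.val = pathOffset g k m t) ∨
    -- internal edges of each long pendant path
    (∃ t : Fin ℓ, j.val = i.val + 1 ∧ pathOffset g k m t ≤ i.val ∧
      i.val + 1 < pathOffset g k m t + m t))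

open Finset

namespace SimpleGraph

/-- Exactly the conditions for `v ↦ s(v, p v)` to be a bijection from the vertices onto the
edges; a unicyclic graph has such a map (orient its cycle and root its trees on the cycle). -/
structure IsParentMap {V : Type*} (G : SimpleGraph V) (p : V → V) : Prop where
  adj : ∀ v, G.Adj v (p v)
  eq_or_eq_of_adj : ∀ ⦃a b⦄, G.Adj a b → b = p a ∨ a = p b
  parent_parent_ne : ∀ v, p (p v) ≠ v

namespace IsParentMap

variable {V : Type*} [Fintype V] {G : SimpleGraph V} {p : V → V}

theorem sum_edgeFinset {M : Type*} [AddCommMonoid M] (hp : G.IsParentMap p)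
    (f : Sym2 V → M) : ∑ e ∈ G.edgeFinset, f e = ∑ v, f s(v, p v) := by
  refine (sum_bij (fun v _ => s(v, p v)) (fun v _ => G.mem_edgeFinset.2 (hp.adj v)) ?_ ?_
    fun _ _ => rfl).symm
  · rintro a - b - hab
    rcases Sym2.eq_iff.1 hab with ⟨h, -⟩ | ⟨h₁, h₂⟩
    · exact h
    · subst h₁
      exact (hp.parent_parent_ne b h₂).elim
  · intro e he
    induction e using Sym2.ind with
    | _ a b =>
      rcases hp.eq_or_eq_of_adj (G.mem_edgeFinset.1 he) with h | h <;> dsimp only at h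
      · exact ⟨a, mem_univ _, by rw [h]⟩
      · exact ⟨b, mem_univ _, by rw [h, Sym2.eq_swap]⟩

theorem neighborFinset_eq (hp : G.IsParentMap p) (v : V) :
    G.neighborFinset v = insert (p v) ({u | p u = v} : Finset V) := by
  ext w
  simp only [mem_neighborFinset, mem_insert, mem_filter, mem_univ, true_and]
  refine ⟨fun h => (hp.eq_or_eq_of_adj h).imp id Eq.symm, ?_⟩
  rintro (rfl | rfl)
  exacts [hp.adj v, (hp.adj w).symm]

theorem degree_eq (hp : G.IsParentMap p) (v : V) : G.degree v = #{u | p u = v} + 1 := by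
  rw [← card_neighborFinset_eq_degree, hp.neighborFinset_eq, card_insert_of_notMem]
  simpa using hp.parent_parent_ne v

end IsParentMap

end SimpleGraph

section PathOffset

variable {ℓ g k : ℕ} {m : Fin ℓ → ℕ}

theorem pathOffset_eq (t : Fin ℓ) : pathOffset g k m t = g + k + ∑ s ∈ Iio t, m s := by
  rw [pathOffset, filter_gt_eq_Iio]

theorem le_pathOffset (t : Fin ℓ) : g + k ≤ pathOffset g k m t :=
  Nat.le_add_right _ _

theorem pathOffset_add_eq (t : Fin ℓ) :
    pathOffset g k m t + m t = g + k + ∑ s ∈ Iic t, m s := by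
  rw [pathOffset_eq, ← Iio_insert, sum_insert notMem_Iio_self]
  ring

theorem pathOffset_add_le_pathOffset {t t' : Fin ℓ} (h : t < t') :
    pathOffset g k m t + m t ≤ pathOffset g k m t' := by
  rw [pathOffset_add_eq, pathOffset_eq]
  gcongr
  exact fun s hs => mem_Iio.2 ((mem_Iic.1 hs).trans_lt h)

theorem pathOffset_add_le (t : Fin ℓ) : pathOffset g k m t + m t ≤ g + k + ∑ s, m s := by
  rw [pathOffset_add_eq]
  gcongr
  exact subset_univ _

theorem eq_of_mem_path {t t' : Fin ℓ} {v : ℕ}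
    (h : pathOffset g k m t ≤ v ∧ v < pathOffset g k m t + m t)
    (h' : pathOffset g k m t' ≤ v ∧ v < pathOffset g k m t' + m t') : t = t' := by
  rcases lt_trichotomy t t' with hlt | rfl | hlt
  · have := pathOffset_add_le_pathOffset (g := g) (k := k) (m := m) hlt; omega
  · rfl
  · have := pathOffset_add_le_pathOffset (g := g) (k := k) (m := m) hlt; omega

theorem pathOffset_injective (hm : ∀ t, 0 < m t) : Function.Injective (pathOffset g k m) :=
  fun t t' h => eq_of_mem_path (v := pathOffset g k m t) ⟨le_rfl, by simp [hm t]⟩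
    ⟨h.ge, by have := hm t'; omega⟩

theorem exists_mem_path {v : ℕ} (h₁ : g + k ≤ v) (h₂ : v < g + k + ∑ s, m s) :
    ∃ t, pathOffset g k m t ≤ v ∧ v < pathOffset g k m t + m t := by
  have hℓ : 0 < ℓ := by
    rcases Nat.eq_zero_or_pos ℓ with rfl | h
    · simp only [univ_eq_empty, sum_empty, add_zero] at h₂
      omega
    · exact h
  set S : Finset (Fin ℓ) := {t | pathOffset g k m t ≤ v}
  have hS : S.Nonempty := by
    refine ⟨⟨0, hℓ⟩, mem_filter.2 ⟨mem_univ _, ?_⟩⟩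
    have : Iio (⟨0, hℓ⟩ : Fin ℓ) = ∅ := by
      ext s
      simp [Fin.lt_def]
    simpa [pathOffset_eq, this] using h₁
  set t := S.max' hS
  refine ⟨t, (mem_filter.1 (S.max'_mem hS)).2, not_le.1 fun ht => ?_⟩
  by_cases hlast : t.val + 1 < ℓ
  · have hIio : (Iio ⟨t + 1, hlast⟩ : Finset (Fin ℓ)) = Iic t := by
      refine Finset.ext fun s => ?_
      simp only [mem_Iio, mem_Iic, Fin.lt_def, Fin.le_def]
      omega
    have hsucc : pathOffset g k m ⟨t + 1, hlast⟩ = pathOffset g k m t + m t := by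
      rw [pathOffset_add_eq, pathOffset_eq, hIio]
    have := S.le_max' ⟨t + 1, hlast⟩ (mem_filter.2 ⟨mem_univ _, hsucc.trans_le ht⟩)
    exact absurd this (by simp only [Fin.le_def, not_le]; omega)
  · have : (Iic t : Finset (Fin ℓ)) = univ := by
      refine Finset.ext fun s => ?_
      simp only [mem_Iic, mem_univ, Fin.le_def, iff_true]
      omega
    rw [pathOffset_add_eq, this] at ht
    omega

theorem exists_eq_pathOffset_add {v : ℕ} (h₁ : g + k ≤ v) (h₂ : v < g + k + ∑ s, m s) :
    ∃ t i, i < m t ∧ v = pathOffset g k m t + i := by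
  obtain ⟨t, ht₁, ht₂⟩ := exists_mem_path h₁ h₂
  exact ⟨t, v - pathOffset g k m t, by omega, by omega⟩

theorem sum_range_eq_add_sum_paths {M : Type*} [AddCommMonoid M] {n : ℕ}
    (hn : n = g + k + ∑ t, m t) (f : ℕ → M) :
    ∑ v ∈ range n, f v = ∑ v ∈ range g, f v + ∑ v ∈ Ico g (g + k), f v +
      ∑ t, ∑ i ∈ range (m t), f (pathOffset g k m t + i) := by
  have hpaths : Ico (g + k) n = univ.biUnion fun t =>
      Ico (pathOffset g k m t) (pathOffset g k m t + m t) := by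
    ext v
    simp only [mem_Ico, mem_biUnion, mem_univ, true_and]
    constructor
    · rintro ⟨h₁, h₂⟩
      exact exists_mem_path h₁ (hn ▸ h₂)
    · rintro ⟨t, h₁, h₂⟩
      have := le_pathOffset (g := g) (k := k) (m := m) t
      have := pathOffset_add_le (g := g) (k := k) (m := m) t
      omega
  have hdisj : ((univ : Finset (Fin ℓ)) : Set (Fin ℓ)).PairwiseDisjoint fun t =>
      Ico (pathOffset g k m t) (pathOffset g k m t + m t) := by
    intro t _ t' _ htt'
    refine disjoint_left.2 fun v hv hv' => htt' ?_
    exact eq_of_mem_path (mem_Ico.1 hv) (mem_Ico.1 hv')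
  rw [range_eq_Ico, ← sum_Ico_consecutive f (Nat.zero_le (g + k)) (by omega : g + k ≤ n),
    ← sum_Ico_consecutive f (Nat.zero_le g) (by omega : g ≤ g + k), hpaths,
    sum_biUnion hdisj, ← range_eq_Ico]
  simp only [sum_Ico_eq_sum_range, add_tsub_cancel_left, add_assoc]

end PathOffset

noncomputable def eulerSomborTerm (x y : ℝ) : ℝ := √(x ^ 2 + y ^ 2 + x * y)

theorem eusWeight_mk {V : Type*} [Fintype V] (G : SimpleGraph V) (a b : V) :
    eusWeight G s(a, b) = eulerSomborTerm (G.degree a) (G.degree b) := rfl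

namespace H1

variable {n g k ℓ : ℕ} {m : Fin ℓ → ℕ}

/-- The hub `0` is joined to its parent `g - 1`, every other vertex to its neighbour towards
the hub; the edges of `H1 n g k m` are exactly the pairs `{v, parent g k m v}`. -/
def parent (g k : ℕ) (m : Fin ℓ → ℕ) (v : ℕ) : ℕ :=
  if v = 0 then g - 1
  else if v < g then v - 1
  else if v < g + k ∨ ∃ t, pathOffset g k m t = v then 0
  else v - 1

def childCount (n g k : ℕ) (m : Fin ℓ → ℕ) (v : ℕ) : ℕ :=
  #{u ∈ range n | parent g k m u = v}

theorem parent_zero : parent g k m 0 = g - 1 := rfl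

theorem parent_of_lt {v : ℕ} (h₀ : v ≠ 0) (h : v < g) : parent g k m v = v - 1 := by
  simp [parent, h₀, h]

theorem parent_of_le_of_lt {v : ℕ} (h₁ : g ≤ v) (h₂ : v < g + k) : parent g k m v = 0 := by
  unfold parent
  split_ifs <;> omega

theorem parent_pathOffset (t : Fin ℓ) : parent g k m (pathOffset g k m t) = 0 := by
  have := le_pathOffset (g := g) (k := k) (m := m) t
  unfold parent
  split_ifs with h₀ h₁ h₂
  · omega
  · omega
  · rfl
  · exact absurd (Or.inr ⟨t, rfl⟩) h₂

theorem parent_pathOffset_add (hm : ∀ t, 0 < m t) {t : Fin ℓ} {i : ℕ} (hi₀ : i ≠ 0)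
    (hi : i < m t) : parent g k m (pathOffset g k m t + i) = pathOffset g k m t + i - 1 := by
  have := le_pathOffset (g := g) (k := k) (m := m) t
  have hstart : ¬∃ t', pathOffset g k m t' = pathOffset g k m t + i := by
    rintro ⟨t', ht'⟩
    have := hm t'
    obtain rfl : t' = t := eq_of_mem_path (g := g) (k := k) (m := m)
      (v := pathOffset g k m t + i) ⟨by omega, by omega⟩ ⟨by omega, by omega⟩
    omega
  unfold parent
  split_ifs with h₀ h₁ h₂
  · omega
  · omega
  · exact (hstart (h₂.resolve_left (by omega))).elim
  · rfl

theorem parent_eq_zero_or_pred {v : ℕ} (h₀ : v ≠ 0) :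
    parent g k m v = 0 ∨ parent g k m v = v - 1 := by
  unfold parent
  split_ifs <;> omega

theorem parent_lt (hn : n = g + k + ∑ t, m t) {v : ℕ} (hv : v < n) : parent g k m v < n := by
  unfold parent
  split_ifs <;> omega

theorem parent_eq_or_eq_of_edge (hm : ∀ t, 0 < m t) {i j : ℕ}
    (h : (j = i + 1 ∧ i + 1 < g) ∨ (i = 0 ∧ j = g - 1) ∨
      (i = 0 ∧ g ≤ j ∧ j < g + k) ∨ (∃ t : Fin ℓ, i = 0 ∧ j = pathOffset g k m t) ∨
      (∃ t : Fin ℓ, j = i + 1 ∧ pathOffset g k m t ≤ i ∧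
        i + 1 < pathOffset g k m t + m t)) :
    j = parent g k m i ∨ i = parent g k m j := by
  rcases h with ⟨rfl, h⟩ | ⟨rfl, rfl⟩ | ⟨rfl, h₁, h₂⟩ | ⟨t, rfl, rfl⟩ |
    ⟨t, rfl, h₁, h₂⟩
  · rw [parent_of_lt (by omega) h]
    omega
  · exact Or.inl parent_zero.symm
  · exact Or.inr (parent_of_le_of_lt h₁ h₂).symm
  · exact Or.inr (parent_pathOffset t).symm
  · have := parent_pathOffset_add (g := g) (k := k) hm (t := t) (i := i + 1 - pathOffset g k m t)
      (by omega) (by omega)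
    rw [Nat.add_sub_cancel' (by omega)] at this
    omega

theorem parent_parent_ne (hg : 3 ≤ g) (v : ℕ) : parent g k m (parent g k m v) ≠ v := by
  rcases eq_or_ne v 0 with rfl | h₀
  · rw [parent_zero, parent_of_lt (by omega) (by omega)]
    omega
  rcases parent_eq_zero_or_pred (g := g) (k := k) (m := m) h₀ with h | h <;> rw [h]
  · rw [parent_zero]
    intro hv
    rw [parent_of_lt h₀ (by omega)] at h
    omega
  · rcases eq_or_ne (v - 1) 0 with h₁ | h₁
    · rw [h₁, parent_zero]
      omega
    · rcases parent_eq_zero_or_pred (g := g) (k := k) (m := m) h₁ with h' | h' <;> omega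

def parentFin (hn : n = g + k + ∑ t, m t) (v : Fin n) : Fin n :=
  ⟨parent g k m v, parent_lt hn v.isLt⟩

theorem adj_parentFin (hg : 3 ≤ g) (hm : ∀ t, 0 < m t) (hn : n = g + k + ∑ t, m t)
    (v : Fin n) :
    (H1 n g k m).Adj v (parentFin hn v) := by
  obtain ⟨v, hv⟩ := v
  simp only [H1, SimpleGraph.fromRel_adj, parentFin, ne_eq, Fin.mk.injEq]
  rcases eq_or_ne v 0 with rfl | h₀
  · rw [parent_zero]
    exact ⟨by omega, Or.inl (Or.inr (Or.inl ⟨rfl, rfl⟩))⟩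
  rcases lt_or_ge v g with h₁ | h₁
  · rw [parent_of_lt h₀ h₁]
    exact ⟨by omega, Or.inr (Or.inl ⟨by omega, by omega⟩)⟩
  rcases lt_or_ge v (g + k) with h₂ | h₂
  · rw [parent_of_le_of_lt h₁ h₂]
    exact ⟨by omega, Or.inr (Or.inr (Or.inr (Or.inl ⟨rfl, h₁, h₂⟩)))⟩
  obtain ⟨t, i, hi, rfl⟩ := exists_eq_pathOffset_add h₂ (hn ▸ hv)
  rcases eq_or_ne i 0 with rfl | hi₀
  · rw [add_zero, parent_pathOffset]
    exact ⟨by omega, Or.inr (Or.inr (Or.inr (Or.inr (Or.inl ⟨t, rfl, rfl⟩))))⟩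
  · rw [parent_pathOffset_add hm hi₀ hi]
    exact ⟨by omega,
      Or.inr (Or.inr (Or.inr (Or.inr (Or.inr ⟨t, by omega, by omega, by omega⟩))))⟩

theorem isParentMap (hg : 3 ≤ g) (hm : ∀ t, 0 < m t) (hn : n = g + k + ∑ t, m t) :
    (H1 n g k m).IsParentMap (parentFin hn) where
  adj := adj_parentFin hg hm hn
  eq_or_eq_of_adj a b h := by
    simp only [H1, SimpleGraph.fromRel_adj] at h
    rcases h with ⟨-, h | h⟩
    · exact (parent_eq_or_eq_of_edge hm h).imp Fin.ext Fin.ext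
    · exact (parent_eq_or_eq_of_edge hm h).symm.imp Fin.ext Fin.ext
  parent_parent_ne v h := parent_parent_ne hg v (congrArg Fin.val h)

theorem degree_eq (hg : 3 ≤ g) (hm : ∀ t, 0 < m t) (hn : n = g + k + ∑ t, m t) (v : Fin n) :
    (H1 n g k m).degree v = childCount n g k m v + 1 := by
  rw [(isParentMap hg hm hn).degree_eq, childCount, card_filter, card_filter,
    ← Fin.sum_univ_eq_sum_range (fun u => if parent g k m u = v then 1 else 0)]
  simp only [parentFin, Fin.ext_iff]

theorem eq_add_one_of_parent_eq {u v : ℕ} (h₀ : v ≠ 0) (h₁ : v ≠ g - 1)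
    (h : parent g k m u = v) : u = v + 1 := by
  rcases eq_or_ne u 0 with rfl | hu
  · exact absurd (parent_zero.symm.trans h) (Ne.symm h₁)
  · rcases parent_eq_zero_or_pred (g := g) (k := k) (m := m) hu with h' | h' <;> omega

theorem exists_mem_path_of_parent_ne_zero (hn : n = g + k + ∑ t, m t) {u : ℕ} (h₁ : g ≤ u)
    (h₂ : u < n) (h : parent g k m u ≠ 0) :
    ∃ t, pathOffset g k m t < u ∧ u < pathOffset g k m t + m t := by
  rcases lt_or_ge u (g + k) with h₃ | h₃
  · exact absurd (parent_of_le_of_lt h₁ h₃) h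
  obtain ⟨t, i, hi, rfl⟩ := exists_eq_pathOffset_add h₃ (hn ▸ h₂)
  rcases eq_or_ne i 0 with rfl | hi₀
  · exact absurd (parent_pathOffset t) h
  · exact ⟨t, by omega, by omega⟩

theorem childCount_eq_one {v w : ℕ} (hw : w < n) (hpw : parent g k m w = v)
    (huniq : ∀ u < n, parent g k m u = v → u = w) : childCount n g k m v = 1 := by
  rw [childCount, card_eq_one]
  refine ⟨w, eq_singleton_iff_unique_mem.2 ⟨mem_filter.2 ⟨mem_range.2 hw, hpw⟩, ?_⟩⟩
  intro u hu
  rw [mem_filter, mem_range] at hu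
  exact huniq u hu.1 hu.2

theorem childCount_eq_zero {v : ℕ} (h : ∀ u < n, parent g k m u ≠ v) :
    childCount n g k m v = 0 := by
  rw [childCount, card_eq_zero, filter_eq_empty_iff]
  exact fun u hu => h u (mem_range.1 hu)

theorem childCount_zero (hg : 3 ≤ g) (hm : ∀ t, 0 < m t) (hn : n = g + k + ∑ t, m t) :
    childCount n g k m 0 = k + ℓ + 1 := by
  have hle := le_pathOffset (g := g) (k := k) (m := m)
  have hchildren : ({u ∈ range n | parent g k m u = 0} : Finset ℕ) =
      insert 1 (Ico g (g + k) ∪ univ.image (pathOffset g k m)) := by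
    ext u
    simp only [mem_filter, mem_range, mem_insert, mem_union, mem_Ico, mem_image, mem_univ,
      true_and]
    constructor
    · rintro ⟨hu, h⟩
      rcases eq_or_ne u 0 with rfl | h₀
      · rw [parent_zero] at h
        omega
      rcases lt_or_ge u g with h₁ | h₁
      · rw [parent_of_lt h₀ h₁] at h
        omega
      rcases lt_or_ge u (g + k) with h₂ | h₂
      · exact Or.inr (Or.inl ⟨h₁, h₂⟩)
      obtain ⟨t, i, hi, rfl⟩ := exists_eq_pathOffset_add h₂ (hn ▸ hu)
      rcases eq_or_ne i 0 with rfl | hi₀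
      · exact Or.inr (Or.inr ⟨t, rfl⟩)
      · rw [parent_pathOffset_add hm hi₀ hi] at h
        have := hle t
        omega
    · rintro (rfl | ⟨h₁, h₂⟩ | ⟨t, rfl⟩)
      · exact ⟨by omega, parent_of_lt one_ne_zero (by omega)⟩
      · exact ⟨by omega, parent_of_le_of_lt h₁ h₂⟩
      · have := pathOffset_add_le (g := g) (k := k) (m := m) t
        have := hm t
        exact ⟨by omega, parent_pathOffset t⟩
  rw [childCount, hchildren, card_insert_of_notMem, card_union_of_disjoint,
    card_image_of_injective _ (pathOffset_injective hm), Nat.card_Ico, card_univ,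
    Fintype.card_fin]
  · omega
  · refine disjoint_left.2 fun u hu hu' => ?_
    obtain ⟨t, -, rfl⟩ := mem_image.1 hu'
    have := hle t
    rw [mem_Ico] at hu
    omega
  · simp only [mem_union, mem_Ico, mem_image, mem_univ, true_and, not_or, not_exists]
    exact ⟨by omega, fun t => by have := hle t; omega⟩

theorem childCount_of_lt (hg : 3 ≤ g) (hn : n = g + k + ∑ t, m t) {v : ℕ} (h₀ : v ≠ 0)
    (h : v < g) : childCount n g k m v = 1 := by
  rcases lt_or_ge (v + 1) g with h₁ | h₁
  · refine childCount_eq_one (w := v + 1) (by omega) ?_ fun u _ hu =>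
      eq_add_one_of_parent_eq h₀ (by omega) hu
    rw [parent_of_lt (by omega) h₁]
    rfl
  · refine childCount_eq_one (w := 0) (by omega) (by rw [parent_zero]; omega) fun u hu h' => ?_
    by_contra hu₀
    rcases parent_eq_zero_or_pred (g := g) (k := k) (m := m) hu₀ with h'' | h''
    · omega
    · obtain ⟨t, ht, -⟩ := exists_mem_path_of_parent_ne_zero hn (by omega) hu (by omega)
      have := le_pathOffset (g := g) (k := k) (m := m) t
      omega

theorem childCount_of_le_of_lt (hg : 3 ≤ g) (hn : n = g + k + ∑ t, m t) {v : ℕ}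
    (h₁ : g ≤ v) (h₂ : v < g + k) : childCount n g k m v = 0 := by
  refine childCount_eq_zero fun u hu h => ?_
  obtain rfl := eq_add_one_of_parent_eq (by omega) (by omega) h
  obtain ⟨t, ht, -⟩ := exists_mem_path_of_parent_ne_zero hn (by omega) hu (by omega)
  have := le_pathOffset (g := g) (k := k) (m := m) t
  omega

theorem childCount_pathOffset_add (hg : 3 ≤ g) (hm : ∀ t, 0 < m t)
    (hn : n = g + k + ∑ t, m t) {t : Fin ℓ} {i : ℕ} (hi : i + 1 < m t) :
    childCount n g k m (pathOffset g k m t + i) = 1 := by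
  have h₁ := le_pathOffset (g := g) (k := k) (m := m) t
  have h₂ := pathOffset_add_le (g := g) (k := k) (m := m) t
  refine childCount_eq_one (w := pathOffset g k m t + i + 1) (by omega) ?_ fun u _ hu =>
    eq_add_one_of_parent_eq (by omega) (by omega) hu
  rw [add_assoc, parent_pathOffset_add hm (by omega) hi]
  omega

theorem childCount_pathOffset_add_pred (hg : 3 ≤ g) (hm : ∀ t, 0 < m t)
    (hn : n = g + k + ∑ t, m t) (t : Fin ℓ) :
    childCount n g k m (pathOffset g k m t + (m t - 1)) = 0 := by
  have := le_pathOffset (g := g) (k := k) (m := m) t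
  have := hm t
  refine childCount_eq_zero fun u hu h => ?_
  obtain rfl := eq_add_one_of_parent_eq (by omega) (by omega) h
  obtain ⟨t', ht'₁, ht'₂⟩ := exists_mem_path_of_parent_ne_zero hn (by omega) hu (by omega)
  obtain rfl : t = t' := eq_of_mem_path (g := g) (k := k) (m := m)
    (v := pathOffset g k m t + (m t - 1)) ⟨by omega, by omega⟩ ⟨by omega, by omega⟩
  omega

noncomputable def parentEdgeTerm (n g k : ℕ) (m : Fin ℓ → ℕ) (v : ℕ) : ℝ :=
  eulerSomborTerm (childCount n g k m v + 1) (childCount n g k m (parent g k m v) + 1)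

theorem eus_eq_sum_parentEdgeTerm (hg : 3 ≤ g) (hm : ∀ t, 0 < m t)
    (hn : n = g + k + ∑ t, m t) :
    EUS (H1 n g k m) = ∑ v ∈ range n, parentEdgeTerm n g k m v := by
  rw [EUS, (isParentMap hg hm hn).sum_edgeFinset, ← Fin.sum_univ_eq_sum_range]
  refine sum_congr rfl fun v _ => ?_
  rw [eusWeight_mk, degree_eq hg hm hn, degree_eq hg hm hn, parentEdgeTerm]
  push_cast
  rfl

theorem parentEdgeTerm_zero (hg : 3 ≤ g) (hm : ∀ t, 0 < m t) (hn : n = g + k + ∑ t, m t) :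
    parentEdgeTerm n g k m 0 = eulerSomborTerm (k + ℓ + 2) 2 := by
  rw [parentEdgeTerm, childCount_zero hg hm hn, parent_zero,
    childCount_of_lt hg hn (by omega) (by omega)]
  push_cast
  ring_nf

theorem parentEdgeTerm_one (hg : 3 ≤ g) (hm : ∀ t, 0 < m t) (hn : n = g + k + ∑ t, m t) :
    parentEdgeTerm n g k m 1 = eulerSomborTerm 2 (k + ℓ + 2) := by
  rw [parentEdgeTerm, childCount_of_lt hg hn one_ne_zero (by omega),
    parent_of_lt one_ne_zero (by omega), Nat.sub_self, childCount_zero hg hm hn]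
  push_cast
  ring_nf

theorem parentEdgeTerm_of_lt (hg : 3 ≤ g) (hn : n = g + k + ∑ t, m t) {v : ℕ} (h₁ : 2 ≤ v)
    (h₂ : v < g) : parentEdgeTerm n g k m v = eulerSomborTerm 2 2 := by
  rw [parentEdgeTerm, childCount_of_lt hg hn (by omega) h₂, parent_of_lt (by omega) h₂,
    childCount_of_lt hg hn (by omega) (by omega)]
  norm_num

theorem parentEdgeTerm_of_le_of_lt (hg : 3 ≤ g) (hm : ∀ t, 0 < m t)
    (hn : n = g + k + ∑ t, m t) {v : ℕ} (h₁ : g ≤ v) (h₂ : v < g + k) :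
    parentEdgeTerm n g k m v = eulerSomborTerm 1 (k + ℓ + 2) := by
  rw [parentEdgeTerm, childCount_of_le_of_lt hg hn h₁ h₂, parent_of_le_of_lt h₁ h₂,
    childCount_zero hg hm hn]
  push_cast
  ring_nf

theorem parentEdgeTerm_pathOffset (hg : 3 ≤ g) (hm : ∀ t, 2 ≤ m t)
    (hn : n = g + k + ∑ t, m t) (t : Fin ℓ) :
    parentEdgeTerm n g k m (pathOffset g k m t) = eulerSomborTerm 2 (k + ℓ + 2) := by
  have hm₀ : ∀ t, 0 < m t := fun t => by have := hm t; omega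
  have h := childCount_pathOffset_add hg hm₀ hn (t := t) (i := 0) (by have := hm t; omega)
  rw [add_zero] at h
  rw [parentEdgeTerm, h, parent_pathOffset, childCount_zero hg hm₀ hn]
  push_cast
  ring_nf

theorem parentEdgeTerm_pathOffset_add (hg : 3 ≤ g) (hm : ∀ t, 0 < m t)
    (hn : n = g + k + ∑ t, m t) {t : Fin ℓ} {i : ℕ} (hi₀ : i ≠ 0) (hi : i + 1 < m t) :
    parentEdgeTerm n g k m (pathOffset g k m t + i) = eulerSomborTerm 2 2 := by
  rw [parentEdgeTerm, childCount_pathOffset_add hg hm hn hi,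
    parent_pathOffset_add hm hi₀ (by omega), Nat.add_sub_assoc (by omega),
    childCount_pathOffset_add hg hm hn (by omega)]
  norm_num

theorem parentEdgeTerm_pathOffset_add_of_add_one_eq (hg : 3 ≤ g) (hm : ∀ t, 0 < m t)
    (hn : n = g + k + ∑ t, m t) {t : Fin ℓ} {i : ℕ} (hi₀ : i ≠ 0) (hi : i + 1 = m t) :
    parentEdgeTerm n g k m (pathOffset g k m t + i) = eulerSomborTerm 1 2 := by
  obtain rfl : i = m t - 1 := by omega
  rw [parentEdgeTerm, childCount_pathOffset_add_pred hg hm hn,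
    parent_pathOffset_add hm hi₀ (by omega), Nat.add_sub_assoc (by omega),
    childCount_pathOffset_add hg hm hn (by omega)]
  norm_num

theorem sum_parentEdgeTerm_cycle (hg : 3 ≤ g) (hm : ∀ t, 0 < m t)
    (hn : n = g + k + ∑ t, m t) :
    ∑ v ∈ range g, parentEdgeTerm n g k m v = eulerSomborTerm (k + ℓ + 2) 2 +
      eulerSomborTerm 2 (k + ℓ + 2) + ((g : ℝ) - 2) * eulerSomborTerm 2 2 := by
  rw [range_eq_Ico, sum_eq_sum_Ico_succ_bot (by omega), sum_eq_sum_Ico_succ_bot (by omega),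
    sum_eq_card_nsmul fun v hv => parentEdgeTerm_of_lt hg hn (mem_Ico.1 hv).1 (mem_Ico.1 hv).2,
    parentEdgeTerm_zero hg hm hn, parentEdgeTerm_one hg hm hn, Nat.card_Ico, nsmul_eq_mul,
    Nat.cast_sub (by omega)]
  push_cast
  ring

theorem sum_parentEdgeTerm_pendants (hg : 3 ≤ g) (hm : ∀ t, 0 < m t)
    (hn : n = g + k + ∑ t, m t) :
    ∑ v ∈ Ico g (g + k), parentEdgeTerm n g k m v = k * eulerSomborTerm 1 (k + ℓ + 2) := by
  rw [sum_eq_card_nsmul fun v hv =>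
      parentEdgeTerm_of_le_of_lt hg hm hn (mem_Ico.1 hv).1 (mem_Ico.1 hv).2,
    Nat.card_Ico, add_tsub_cancel_left, nsmul_eq_mul]

theorem sum_parentEdgeTerm_path (hg : 3 ≤ g) (hm : ∀ t, 2 ≤ m t) (hn : n = g + k + ∑ t, m t)
    (t : Fin ℓ) :
    ∑ i ∈ range (m t), parentEdgeTerm n g k m (pathOffset g k m t + i) =
      eulerSomborTerm 2 (k + ℓ + 2) + ((m t : ℝ) - 2) * eulerSomborTerm 2 2 +
        eulerSomborTerm 1 2 := by
  have hm₀ : ∀ t, 0 < m t := fun t => by have := hm t; omega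
  obtain ⟨j, hj⟩ : ∃ j, m t = j + 2 := ⟨m t - 2, by have := hm t; omega⟩
  rw [range_eq_Ico, hj, sum_eq_sum_Ico_succ_bot (by omega), sum_Ico_succ_top (by omega),
    add_zero, parentEdgeTerm_pathOffset hg hm hn,
    parentEdgeTerm_pathOffset_add_of_add_one_eq hg hm₀ hn (by omega) (by omega),
    sum_eq_card_nsmul fun i hi => parentEdgeTerm_pathOffset_add hg hm₀ hn
      (by have := mem_Ico.1 hi; omega) (by have := mem_Ico.1 hi; omega),
    Nat.card_Ico, nsmul_eq_mul]
  push_cast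
  ring

end H1

theorem eus_H1_general (n g k ℓ : ℕ) (m : Fin ℓ → ℕ) (hg : 3 ≤ g)
    (hm : ∀ t, 2 ≤ m t) (hn : n = g + k + ∑ t, m t) :
    EUS (H1 n g k m) =
      ((ℓ : ℝ) + 2) * Real.sqrt (((k : ℝ) + ℓ + 2)^2 + 2 * ((k : ℝ) + ℓ + 2) + 4) +
        (ℓ : ℝ) * Real.sqrt 7 +
        (k : ℝ) * Real.sqrt (((k : ℝ) + ℓ + 2)^2 + ((k : ℝ) + ℓ + 2) + 1) +
        ((n : ℝ) - k - 2 * ℓ - 2) * Real.sqrt 12 := by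
  have hm₀ : ∀ t, 0 < m t := fun t => by have := hm t; omega
  rw [H1.eus_eq_sum_parentEdgeTerm hg hm₀ hn, sum_range_eq_add_sum_paths hn,
    H1.sum_parentEdgeTerm_cycle hg hm₀ hn, H1.sum_parentEdgeTerm_pendants hg hm₀ hn]
  simp only [H1.sum_parentEdgeTerm_path hg hm hn, sum_add_distrib, ← sum_mul, sum_sub_distrib,
    sum_const, card_univ, Fintype.card_fin, nsmul_eq_mul]
  have hn' : (n : ℝ) = g + k + ∑ t, (m t : ℝ) := by rw [hn]; push_cast; rfl
  rw [hn']
  simp only [eulerSomborTerm]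
  ring_nf

/-- The Euler Sombor index of the unicyclic graph `H₁` of order `n`, girth `g` (with
`3 ≤ g ≤ n-2`), having `k ≥ 0` pendant paths of length `1` and `ℓ ≥ 0` pendant paths of
length at least `2` attached at one vertex of the cycle, equals
`(ℓ+2)√((k+ℓ+2)² + 2(k+ℓ+2) + 4) + ℓ√7 + k√((k+ℓ+2)² + (k+ℓ+2) + 1) + (n-k-2ℓ-2)√12`. -/
theorem eus_H1 (n g k ℓ : ℕ) (m : Fin ℓ → ℕ) (hg : 3 ≤ g) (hgn : g + 2 ≤ n)
    (hm : ∀ t, 2 ≤ m t) (hn : n = g + k + ∑ t, m t) :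
    EUS (H1 n g k m) =
      ((ℓ : ℝ) + 2) * Real.sqrt (((k : ℝ) + ℓ + 2)^2 + 2 * ((k : ℝ) + ℓ + 2) + 4) +
        (ℓ : ℝ) * Real.sqrt 7 +
        (k : ℝ) * Real.sqrt (((k : ℝ) + ℓ + 2)^2 + ((k : ℝ) + ℓ + 2) + 1) +
        ((n : ℝ) - k - 2 * ℓ - 2) * Real.sqrt 12 :=
  eus_H1_general n g k ℓ m hg hm hn
end

section
/- Let G be a finite simple graph and let v_i, v_j be two distinct non-adjacent vertices of G. Then EUS(G) < EUS(G + v_i v_j), where G + v_i v_j is the graph obtained from G by adding the edge v_i v_j. -/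
open scoped Classical

/-!
Adding edges never decreases a degree, so every old edge keeps or increases its weight, and the
new edge adds a positive term, since its endpoints have positive degree. Hence `EUS` is strictly
monotone on the lattice of simple graphs on a fixed vertex set.
-/

namespace SimpleGraph

variable {V : Type*} [Fintype V]

lemma eusWeight_nonneg (G : SimpleGraph V) (e : Sym2 V) : 0 ≤ eusWeight G e := by
  induction e using Sym2.ind with
  | _ a b => exact Real.sqrt_nonneg _

lemma eusWeight_pos_of_mem_edgeSet {G : SimpleGraph V} {e : Sym2 V} (he : e ∈ G.edgeSet) :
    0 < eusWeight G e := by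
  induction e using Sym2.ind with
  | _ a b =>
    have hdeg : (0 : ℝ) < G.degree a := by
      exact_mod_cast (G.degree_pos_iff_exists_adj a).mpr ⟨b, he⟩
    simp only [eusWeight, Sym2.lift_mk]
    apply Real.sqrt_pos.mpr
    positivity

lemma eusWeight_mono {G H : SimpleGraph V} (h : G ≤ H) (e : Sym2 V) :
    eusWeight G e ≤ eusWeight H e := by
  induction e using Sym2.ind with
  | _ a b =>
    have ha : (G.degree a : ℝ) ≤ H.degree a := by exact_mod_cast degree_le_of_le h
    have hb : (G.degree b : ℝ) ≤ H.degree b := by exact_mod_cast degree_le_of_le h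
    simp only [eusWeight, Sym2.lift_mk]
    gcongr

lemma EUS_strictMono : StrictMono (EUS : SimpleGraph V → ℝ) := by
  intro G H hlt
  obtain ⟨e, heH, heG⟩ := Finset.exists_of_ssubset (edgeFinset_strict_mono hlt)
  calc EUS G ≤ ∑ e ∈ G.edgeFinset, eusWeight H e :=
        Finset.sum_le_sum fun e _ => eusWeight_mono hlt.le e
    _ < EUS H :=
        Finset.sum_lt_sum_of_subset (edgeFinset_mono hlt.le) heH heG
          (eusWeight_pos_of_mem_edgeSet (mem_edgeFinset.mp heH))
          fun e _ _ => eusWeight_nonneg H e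

end SimpleGraph

/-- Adding a new edge between two distinct non-adjacent vertices strictly increases the
Euler Sombor index: `EUS(G) < EUS(G + v_i v_j)`. -/
theorem eus_lt_of_addEdge {V : Type*} [Fintype V] (G : SimpleGraph V) (i j : V)
    (hij : i ≠ j) (hadj : ¬ G.Adj i j) :
    EUS G < EUS (G ⊔ SimpleGraph.fromEdgeSet {s(i, j)}) :=
  SimpleGraph.EUS_strictMono (G.lt_sup_edge i j hij hadj)
end

section
/- Let n, p be positive integers with n − p ≥ 2, and let a₁ ≥ aᵢ ≥ 1 be positive integers with i ≥ 2. Then √((n−p+a₁)² + (n−p−2+aᵢ)² + (n−p+a₁)(n−p−2+aᵢ)) > √((n−p−1+a₁)² + (n−p−1+aᵢ)² + (n−p−1+a₁)(n−p−1+aᵢ)). -/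
/-!
Write `w(x, y) = √(x² + y² + xy)` and note `x² + y² + xy = (x + y)² - xy`. Moving one unit from `y`
to `x` keeps `x + y` fixed and changes the product by `(x + 1)(y - 1) - xy = y - x - 1`, so the
radicand grows by `x - y + 1`, which is positive as soon as `y ≤ x`. Here
`x = n - p - 1 + a₁` and `y = n - p - 1 + aᵢ`.
-/

noncomputable def eulerSomborWeight (x y : ℝ) : ℝ := √(x ^ 2 + y ^ 2 + x * y)

lemma eulerSombor_radicand_nonneg (x y : ℝ) : 0 ≤ x ^ 2 + y ^ 2 + x * y := by
  nlinarith [sq_nonneg (x + y), sq_nonneg x, sq_nonneg y]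

lemma eulerSombor_radicand_shift (x y : ℝ) :
    (x + 1) ^ 2 + (y - 1) ^ 2 + (x + 1) * (y - 1) = x ^ 2 + y ^ 2 + x * y + (x - y + 1) := by
  ring

lemma eulerSomborWeight_lt_shift {x y : ℝ} (h : y < x + 1) :
    eulerSomborWeight x y < eulerSomborWeight (x + 1) (y - 1) := by
  unfold eulerSomborWeight
  rw [eulerSombor_radicand_shift]
  exact Real.sqrt_lt_sqrt (eulerSombor_radicand_nonneg x y) (by linarith)

theorem eus_weight_shift_gt_general (n p a₁ aᵢ : ℕ) (ha : aᵢ ≤ a₁) :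
    Real.sqrt (((n : ℝ) - p - 1 + a₁)^2 + ((n : ℝ) - p - 1 + aᵢ)^2 +
        ((n : ℝ) - p - 1 + a₁) * ((n : ℝ) - p - 1 + aᵢ)) <
      Real.sqrt (((n : ℝ) - p + a₁)^2 + ((n : ℝ) - p - 2 + aᵢ)^2 +
        ((n : ℝ) - p + a₁) * ((n : ℝ) - p - 2 + aᵢ)) := by
  have ha' : (aᵢ : ℝ) ≤ a₁ := by exact_mod_cast ha
  have key := eulerSomborWeight_lt_shift
    (x := (n : ℝ) - p - 1 + a₁) (y := (n : ℝ) - p - 1 + aᵢ) (by linarith)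
  unfold eulerSomborWeight at key
  convert key using 3 <;> ring

/-- Claim 1: for positive integers `n, p` with `n - p ≥ 2` and positive integers `a₁ ≥ aᵢ ≥ 1`,
`√((n-p+a₁)² + (n-p-2+aᵢ)² + (n-p+a₁)(n-p-2+aᵢ))
  > √((n-p-1+a₁)² + (n-p-1+aᵢ)² + (n-p-1+a₁)(n-p-1+aᵢ))`. -/
theorem eus_weight_shift_gt (n p a₁ aᵢ : ℕ) (hn : 0 < n) (hp : 0 < p) (hnp : p + 2 ≤ n)
    (hai : 1 ≤ aᵢ) (ha : aᵢ ≤ a₁) :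
    Real.sqrt (((n : ℝ) - p - 1 + a₁)^2 + ((n : ℝ) - p - 1 + aᵢ)^2 +
        ((n : ℝ) - p - 1 + a₁) * ((n : ℝ) - p - 1 + aᵢ)) <
      Real.sqrt (((n : ℝ) - p + a₁)^2 + ((n : ℝ) - p - 2 + aᵢ)^2 +
        ((n : ℝ) - p + a₁) * ((n : ℝ) - p - 2 + aᵢ)) :=
  eus_weight_shift_gt_general n p a₁ aᵢ ha
end

section
/- Let n, p be positive integers with n − p ≥ 2, and let a₁ ≥ aᵢ ≥ 1 be positive integers. Then (a₁+1)√((n−p+a₁)² + n−p+a₁+1) − a₁√((n−p−1+a₁)² + n−p+a₁) + (aᵢ−1)√((n−p−2+aᵢ)² + n−p−1+aᵢ) − aᵢ√((n−p−1+aᵢ)² + n−p+aᵢ) > 0. -/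
/-!
Every radicand has the form `m² + m + 1 = (m + 1/2)² + 3/4`, so each square root is
`m + 1/2` up to an error in `[0, 3/(8(m + 1/2))]`, and multiplied by a coefficient at most
`m + 1/2` the error is at most `3/8`. Replacing the positive terms by their lower bounds and
the negative ones by their upper bounds, the expression is at least
`(x + 2a₁ + 1/2) - (x + 2aᵢ - 3/2) - 3/4 = 2(a₁ - aᵢ) + 5/4 > 0`, where `x = n - p`.
-/

lemma le_sqrt_sq_add (s : ℝ) {c : ℝ} (hc : 0 ≤ c) : s ≤ √(s ^ 2 + c) :=
  (le_abs_self s).trans (Real.abs_le_sqrt (by linarith))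

lemma mul_sqrt_sq_add_le {a s c : ℝ} (ha : 0 ≤ a) (has : a ≤ s) (hc : 0 ≤ c) :
    a * √(s ^ 2 + c) ≤ a * s + c / 2 := by
  calc a * √(s ^ 2 + c) = √(a ^ 2 * (s ^ 2 + c)) := by
        rw [Real.sqrt_mul (sq_nonneg a), Real.sqrt_sq ha]
    _ ≤ a * s + c / 2 := by
        refine Real.sqrt_le_iff.mpr ⟨by nlinarith, ?_⟩
        nlinarith [mul_nonneg (mul_nonneg ha hc) (sub_nonneg.2 has), sq_nonneg c]

theorem eus_pendant_shift_gt_general (n p a₁ aᵢ : ℕ) (hnp : p + 2 ≤ n)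
    (hai : 1 ≤ aᵢ) (ha : aᵢ ≤ a₁) :
    0 < ((a₁ : ℝ) + 1) * Real.sqrt (((n : ℝ) - p + a₁)^2 + (n : ℝ) - p + a₁ + 1) -
        (a₁ : ℝ) * Real.sqrt (((n : ℝ) - p - 1 + a₁)^2 + (n : ℝ) - p + a₁) +
        ((aᵢ : ℝ) - 1) * Real.sqrt (((n : ℝ) - p - 2 + aᵢ)^2 + (n : ℝ) - p - 1 + aᵢ) -
        (aᵢ : ℝ) * Real.sqrt (((n : ℝ) - p - 1 + aᵢ)^2 + (n : ℝ) - p + aᵢ) := by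
  have hx : (2 : ℝ) ≤ n - p := by
    have : (p : ℝ) + 2 ≤ n := by exact_mod_cast hnp
    linarith
  have hb : (1 : ℝ) ≤ aᵢ := by exact_mod_cast hai
  have hab : (aᵢ : ℝ) ≤ a₁ := by exact_mod_cast ha
  rw [show ((n : ℝ) - p + a₁)^2 + n - p + a₁ + 1 = ((n : ℝ) - p + a₁ + 1/2)^2 + 3/4 by ring,
    show ((n : ℝ) - p - 1 + a₁)^2 + n - p + a₁ = ((n : ℝ) - p + a₁ - 1/2)^2 + 3/4 by ring,
    show ((n : ℝ) - p - 2 + aᵢ)^2 + n - p - 1 + aᵢ = ((n : ℝ) - p + aᵢ - 3/2)^2 + 3/4 by ring,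
    show ((n : ℝ) - p - 1 + aᵢ)^2 + n - p + aᵢ = ((n : ℝ) - p + aᵢ - 1/2)^2 + 3/4 by ring]
  have h₁ := mul_le_mul_of_nonneg_left (le_sqrt_sq_add ((n : ℝ) - p + a₁ + 1/2)
    (c := 3/4) (by norm_num)) (by linarith : (0 : ℝ) ≤ a₁ + 1)
  have h₂ := mul_sqrt_sq_add_le (a := (a₁ : ℝ)) (s := (n : ℝ) - p + a₁ - 1/2) (c := 3/4)
    (by linarith) (by linarith) (by norm_num)
  have h₃ := mul_le_mul_of_nonneg_left (le_sqrt_sq_add ((n : ℝ) - p + aᵢ - 3/2)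
    (c := 3/4) (by norm_num)) (by linarith : (0 : ℝ) ≤ aᵢ - 1)
  have h₄ := mul_sqrt_sq_add_le (a := (aᵢ : ℝ)) (s := (n : ℝ) - p + aᵢ - 1/2) (c := 3/4)
    (by linarith) (by linarith) (by norm_num)
  linarith

/-- Claim 2: for positive integers `n, p` with `n - p ≥ 2` and positive integers `a₁ ≥ aᵢ ≥ 1`,
`(a₁+1)√((n-p+a₁)² + n-p+a₁+1) − a₁√((n-p-1+a₁)² + n-p+a₁)
  + (aᵢ−1)√((n-p-2+aᵢ)² + n-p-1+aᵢ) − aᵢ√((n-p-1+aᵢ)² + n-p+aᵢ) > 0`. -/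
theorem eus_pendant_shift_gt (n p a₁ aᵢ : ℕ) (hn : 0 < n) (hp : 0 < p) (hnp : p + 2 ≤ n)
    (hai : 1 ≤ aᵢ) (ha : aᵢ ≤ a₁) :
    0 < ((a₁ : ℝ) + 1) * Real.sqrt (((n : ℝ) - p + a₁)^2 + (n : ℝ) - p + a₁ + 1) -
        (a₁ : ℝ) * Real.sqrt (((n : ℝ) - p - 1 + a₁)^2 + (n : ℝ) - p + a₁) +
        ((aᵢ : ℝ) - 1) * Real.sqrt (((n : ℝ) - p - 2 + aᵢ)^2 + (n : ℝ) - p - 1 + aᵢ) -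
        (aᵢ : ℝ) * Real.sqrt (((n : ℝ) - p - 1 + aᵢ)^2 + (n : ℝ) - p + aᵢ) :=
  eus_pendant_shift_gt_general n p a₁ aᵢ hnp hai ha
end
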